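/- Fix p > 1 and let a be the sequence defined in the context. Then for every constant C > 0, every integer λ ≥ 2, and every sequence {b(n)}_{n=1}^∞ of positive reals tending to infinity, there exist infinitely many n ∈ ℕ for which Σ_{k=n}^{2n−1} |a_k − a_{k+3}| > (C/n) · max_{b(n) ≤ N ≤ λ b(n)} Σ_{k=N}^{2N} a_k (the maximum taken over integers N in that range). In particular, the double sequence c_{jk} = a_j a_k does not belong to DGM(1, ₂α, ₂β, ₂γ, 3). -/

import Mathlib

noncomputable section

/-- The sequence from the counterexample: `a_n = 3/(n ln(n+1))` if `n ≡ 1 (mod 3)`;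
`a_n = 1/((n−3) ln(n−2)) + 1/(n^{1+1/p} ln(n+1))` if `n ≡ 0 (mod 6)`;
`a_n = 1/(n ln(n+1))` otherwise. -/
noncomputable def aseq (p : ℝ) (n : ℕ) : ℝ :=
  if n % 3 = 1 then 3 / ((n : ℝ) * Real.log ((n : ℝ) + 1))
  else if n % 6 = 0 then
    1 / (((n : ℝ) - 3) * Real.log ((n : ℝ) - 2)) +
      1 / ((n : ℝ) ^ (1 + 1/p) * Real.log ((n : ℝ) + 1))
  else 1 / ((n : ℝ) * Real.log ((n : ℝ) + 1))

/-- The class `DGM(p, ₂α, ₂β, ₂γ, r)` of double sequences. -/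
def DGMclass (p : ℝ) (r : ℕ) (c : ℕ → ℕ → ℂ) : Prop :=
  ∃ (C : ℝ) (lam : ℕ) (b₁ b₂ b₃ : ℕ → ℝ),
    0 < C ∧ 2 ≤ lam ∧
    (∀ l, 0 < b₁ l) ∧ Filter.Tendsto b₁ Filter.atTop Filter.atTop ∧
    (∀ l, 0 < b₂ l) ∧ Filter.Tendsto b₂ Filter.atTop Filter.atTop ∧
    (∀ l, 0 < b₃ l) ∧ Filter.Tendsto b₃ Filter.atTop Filter.atTop ∧
    (∀ m n : ℕ, lam ≤ m → 1 ≤ n →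
      ∃ M : ℕ, b₁ m ≤ M ∧ (M : ℝ) ≤ lam * b₁ m ∧
        (∑ j ∈ Finset.Icc m (2*m-1), ‖c j n - c (j+r) n‖ ^ p) ^ (1/p)
          ≤ C / m * ∑ j ∈ Finset.Icc M (2*M), ‖c j n‖) ∧
    (∀ m n : ℕ, 1 ≤ m → lam ≤ n →
      ∃ N : ℕ, b₂ n ≤ N ∧ (N : ℝ) ≤ lam * b₂ n ∧
        (∑ k ∈ Finset.Icc n (2*n-1), ‖c m k - c m (k+r)‖ ^ p) ^ (1/p)
          ≤ C / n * ∑ k ∈ Finset.Icc N (2*N), ‖c m k‖) ∧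
    (∀ m n : ℕ, lam ≤ m → lam ≤ n → ∀ S : ℝ,
      (∀ M N : ℕ, b₃ (m+n) ≤ (M : ℝ) + N →
        ∑ j ∈ Finset.Icc M (2*M), ∑ k ∈ Finset.Icc N (2*N), ‖c j k‖ ≤ S) →
      (∑ j ∈ Finset.Icc m (2*m-1), ∑ k ∈ Finset.Icc n (2*n-1),
          ‖c j k - c (j+r) k - c j (k+r) + c (j+r) (k+r)‖ ^ p) ^ (1/p)
        ≤ C / ((m : ℝ) * n) * S)

open Real Filter

lemma aseq_pos {p : ℝ} (hp : 1 < p) {k : ℕ} (hk : 1 ≤ k) : 0 < aseq p k := by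
  have hk1 : (1:ℝ) ≤ (k:ℝ) := by exact_mod_cast hk
  have hlog : 0 < Real.log ((k:ℝ)+1) := Real.log_pos (by linarith)
  unfold aseq
  split_ifs with h1 h2
  · positivity
  · have hk6 : 6 ≤ k := by omega
    have hk6' : (6:ℝ) ≤ (k:ℝ) := by exact_mod_cast hk6
    have h3 : 0 < (k:ℝ) - 3 := by linarith
    have h4 : 0 < Real.log ((k:ℝ)-2) := Real.log_pos (by linarith)
    have h5 : 0 < (k:ℝ) ^ (1+1/p) := Real.rpow_pos_of_pos (by linarith) _
    positivity
  · positivity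

lemma aseq_le {p : ℝ} (hp : 1 < p) {k : ℕ} (hk : 1 ≤ k) : aseq p k ≤ 8 / k := by
  have hk1 : (1:ℝ) ≤ (k:ℝ) := by exact_mod_cast hk
  have hk0 : (0:ℝ) < k := by linarith
  have hlog2 : (3:ℝ)/8 < Real.log 2 := by
    have := Real.log_two_gt_d9; linarith
  have hlog : (3:ℝ)/8 ≤ Real.log ((k:ℝ)+1) := by
    refine le_trans (le_of_lt hlog2) (Real.log_le_log (by norm_num) (by linarith))
  have hlogpos : 0 < Real.log ((k:ℝ)+1) := by linarith
  unfold aseq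
  split_ifs with h1 h2
  · rw [div_le_div_iff₀ (by positivity) hk0]
    nlinarith
  · have hk6 : 6 ≤ k := by omega
    have hk6' : (6:ℝ) ≤ (k:ℝ) := by exact_mod_cast hk6
    have hlog4 : (1:ℝ) ≤ Real.log ((k:ℝ)-2) := by
      have h4 : Real.log 4 ≤ Real.log ((k:ℝ)-2) := Real.log_le_log (by norm_num) (by linarith)
      have h5 : (1:ℝ) ≤ Real.log 4 := by
        rw [show (4:ℝ) = 2^2 by norm_num, Real.log_pow]
        push_cast
        nlinarith [Real.log_two_gt_d9]
      linarith
    have h5 : (k:ℝ) ≤ (k:ℝ) ^ (1+1/p) := by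
      nth_rewrite 1 [← Real.rpow_one (k:ℝ)]
      exact Real.rpow_le_rpow_of_exponent_le hk1
        (by have h0 : 0 < 1/p := div_pos one_pos (lt_trans one_pos hp); linarith)
    have hfirst : 1 / (((k:ℝ)-3) * Real.log ((k:ℝ)-2)) ≤ 2 / k := by
      rw [div_le_div_iff₀ (by nlinarith) hk0]
      nlinarith
    have hsecond : 1 / ((k:ℝ)^(1+1/p) * Real.log ((k:ℝ)+1)) ≤ 6 / k := by
      have hpow : 0 < (k:ℝ)^(1+1/p) := Real.rpow_pos_of_pos hk0 _
      rw [div_le_div_iff₀ (by positivity) hk0]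
      nlinarith
    have : 2 / (k:ℝ) + 6 / k = 8 / k := by ring
    linarith
  · rw [div_le_div_iff₀ (by positivity) hk0]
    nlinarith

lemma aseq_diff (p : ℝ) {k : ℕ} (hk : k % 6 = 3) :
    |aseq p k - aseq p (k+3)| = 1 / (((k:ℝ)+3) ^ (1+1/p) * Real.log ((k:ℝ)+4)) := by
  have hk3 : 3 ≤ k := by omega
  have hk3' : (3:ℝ) ≤ (k:ℝ) := by exact_mod_cast hk3
  have e : aseq p k - aseq p (k+3)
      = -(1 / (((k:ℝ)+3) ^ (1+1/p) * Real.log ((k:ℝ)+4))) := by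
    unfold aseq
    rw [if_neg (by omega : ¬ k % 3 = 1), if_neg (by omega : ¬ k % 6 = 0),
        if_neg (by omega : ¬ (k+3) % 3 = 1), if_pos (by omega : (k+3) % 6 = 0)]
    push_cast
    rw [show ((k:ℝ)+3-3) = (k:ℝ) by ring, show ((k:ℝ)+3-2) = (k:ℝ)+1 by ring,
        show ((k:ℝ)+3+1) = (k:ℝ)+4 by ring]
    ring
  have hlog : 0 < Real.log ((k:ℝ)+4) := Real.log_pos (by linarith)
  have hpow : 0 < ((k:ℝ)+3) ^ (1+1/p) := Real.rpow_pos_of_pos (by linarith) _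
  rw [e, abs_neg, abs_of_nonneg (div_nonneg (by norm_num) (le_of_lt (mul_pos hpow hlog)))]

lemma sum_aseq_le {p : ℝ} (hp : 1 < p) {N : ℕ} (hN : 1 ≤ N) :
    ∑ k ∈ Finset.Icc N (2*N), aseq p k ≤ 16 := by
  have hN0 : (0:ℝ) < N := by exact_mod_cast hN
  have hN1 : (1:ℝ) ≤ N := by exact_mod_cast hN
  calc ∑ k ∈ Finset.Icc N (2*N), aseq p k ≤ ∑ k ∈ Finset.Icc N (2*N), 8 / (N:ℝ) := by
        apply Finset.sum_le_sum
        intro k hk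
        simp only [Finset.mem_Icc] at hk
        refine le_trans (aseq_le hp (by omega)) ?_
        gcongr
        exact_mod_cast hk.1
  _ = ((Finset.Icc N (2*N)).card : ℝ) * (8 / N) := by
        rw [Finset.sum_const, nsmul_eq_mul]
  _ = ((N:ℝ)+1) * (8 / N) := by
        rw [Nat.card_Icc]
        congr 1
        push_cast [show 2*N+1-N = N+1 by omega]
        ring
  _ ≤ 16 := by
        rw [← mul_div_assoc, div_le_iff₀ hN0]
        nlinarith

lemma eventual_ineq (C p : ℝ) (hC : 0 < C) (hp : 1 < p) :
    ∀ᶠ n : ℕ in Filter.atTop,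
      384*C*(2*(n:ℝ)+2) ^ (1+1/p) * Real.log (2*(n:ℝ)+3) < (n:ℝ)^2 := by
  have hq1 : 1 < 1+1/p := by
    have h0 : 0 < 1/p := div_pos one_pos (lt_trans one_pos hp)
    linarith
  have hq2 : 1+1/p < 2 := by
    have : 1/p < 1 := by rw [div_lt_one (lt_trans one_pos hp)]; exact hp
    linarith
  set q := 1+1/p with hqdef
  have hr : 0 < 2 - q := by linarith
  set K := 768*C*(4:ℝ)^q with hK
  have hKpos : 0 < K := by positivity
  have hreal : ∀ᶠ x : ℝ in Filter.atTop,
      384*C*(2*x+2) ^ q * Real.log (2*x+3) < x^2 := by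
    have hlo := (isLittleO_log_rpow_atTop hr).def
      (show (0:ℝ) < 1/(2*K) by positivity)
    filter_upwards [hlo, Filter.eventually_ge_atTop (4:ℝ)] with x hx hx4
    have hx1 : (1:ℝ) ≤ x := by linarith
    have hx0 : (0:ℝ) < x := by linarith
    have hlogx : 0 ≤ Real.log x := Real.log_nonneg hx1
    have hxr : (0:ℝ) ≤ x ^ (2-q) := le_of_lt (Real.rpow_pos_of_pos hx0 _)
    rw [Real.norm_eq_abs, Real.norm_eq_abs, abs_of_nonneg hlogx, abs_of_nonneg hxr] at hx
    have h1 : (2*x+2)^q ≤ 4^q * x^q := by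
      rw [← Real.mul_rpow (by norm_num) (le_of_lt hx0)]
      exact Real.rpow_le_rpow (by linarith) (by linarith) (by linarith)
    have h2 : Real.log (2*x+3) ≤ 2 * Real.log x := by
      have h := Real.log_le_log (by linarith : (0:ℝ) < 2*x+3) (by nlinarith : 2*x+3 ≤ x^2)
      rwa [Real.log_pow, Nat.cast_ofNat] at h
    have h2' : 0 ≤ Real.log (2*x+3) := Real.log_nonneg (by linarith)
    have hxq : 0 < x ^ q := Real.rpow_pos_of_pos hx0 _
    have hmain : 384*C*(2*x+2)^q * Real.log (2*x+3) ≤ K * (x^q * Real.log x) := by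
      calc 384*C*(2*x+2)^q * Real.log (2*x+3)
          ≤ 384*C*(4^q * x^q) * (2*Real.log x) :=
            mul_le_mul (mul_le_mul_of_nonneg_left h1 (by positivity)) h2 h2' (by positivity)
      _ = K * (x^q * Real.log x) := by rw [hK]; ring
    have hfin : K * (x^q * Real.log x) < x^2 := by
      have hKne : K ≠ 0 := ne_of_gt hKpos
      calc K * (x^q * Real.log x) ≤ K * (x^q * (1/(2*K) * x^(2-q))) :=
            mul_le_mul_of_nonneg_left
              (mul_le_mul_of_nonneg_left hx (le_of_lt hxq)) (le_of_lt hKpos)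
      _ = (1/2) * (x^q * x^(2-q)) := by field_simp
      _ = (1/2) * x^2 := by
            rw [← Real.rpow_add hx0, show q + (2-q) = ((2:ℕ):ℝ) by push_cast; ring,
              Real.rpow_natCast]
      _ < x^2 := by nlinarith
    linarith
  exact (tendsto_natCast_atTop_atTop (R := ℝ)).eventually hreal

theorem statement17 (p : ℝ) (hp : 1 < p) :
    (∀ C : ℝ, 0 < C → ∀ lam : ℕ, 2 ≤ lam → ∀ b : ℕ → ℝ,
      (∀ l, 0 < b l) → Filter.Tendsto b Filter.atTop Filter.atTop →
      ∀ n₀ : ℕ, ∃ n : ℕ, n₀ ≤ n ∧ ∀ N : ℕ, b n ≤ N → (N : ℝ) ≤ lam * b n →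
        C / n * ∑ k ∈ Finset.Icc N (2*N), aseq p k <
          ∑ k ∈ Finset.Icc n (2*n-1), |aseq p k - aseq p (k+3)|) ∧
    ¬ DGMclass 1 3 (fun j k => ((aseq p j * aseq p k : ℝ) : ℂ)) := by
  have part1 : ∀ C : ℝ, 0 < C → ∀ lam : ℕ, 2 ≤ lam → ∀ b : ℕ → ℝ,
      (∀ l, 0 < b l) → Filter.Tendsto b Filter.atTop Filter.atTop →
      ∀ n₀ : ℕ, ∃ n : ℕ, n₀ ≤ n ∧ ∀ N : ℕ, b n ≤ N → (N : ℝ) ≤ lam * b n →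
        C / n * ∑ k ∈ Finset.Icc N (2*N), aseq p k <
          ∑ k ∈ Finset.Icc n (2*n-1), |aseq p k - aseq p (k+3)| := by
    intro C hC lam hlam b hbpos hbt n₀
    obtain ⟨n, hev, hn⟩ := ((eventual_ineq C p hC hp).and
      (Filter.eventually_ge_atTop (max n₀ 48))).exists
    have hn48 : 48 ≤ n := le_trans (le_max_right _ _) hn
    have hn0 : (0:ℝ) < n := by
      have : (48:ℝ) ≤ (n:ℝ) := by exact_mod_cast hn48
      linarith
    refine ⟨n, le_trans (le_max_left _ _) hn, ?_⟩
    intro N hbN hNlam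
    have hN1 : 1 ≤ N := by
      have h0 : (0:ℝ) < N := lt_of_lt_of_le (hbpos n) hbN
      exact_mod_cast h0
    set A := (2*(n:ℝ)+2) ^ (1+1/p) * Real.log (2*(n:ℝ)+3) with hA
    have hApos : 0 < A :=
      mul_pos (Real.rpow_pos_of_pos (by linarith) _) (Real.log_pos (by linarith))
    -- lower bound for the sum of differences
    have hlow : ((n:ℝ)/24) * A⁻¹ ≤ ∑ k ∈ Finset.Icc n (2*n-1), |aseq p k - aseq p (k+3)| := by
      have hsub : (Finset.Ico (n/6+1) (n/3)).image (fun j => 6*j+3) ⊆ Finset.Icc n (2*n-1) := by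
        intro k hk
        simp only [Finset.mem_image, Finset.mem_Ico] at hk
        obtain ⟨j, ⟨hj1, hj2⟩, rfl⟩ := hk
        simp only [Finset.mem_Icc]
        omega
      have h1 : ∑ k ∈ (Finset.Ico (n/6+1) (n/3)).image (fun j => 6*j+3),
          |aseq p k - aseq p (k+3)|
          ≤ ∑ k ∈ Finset.Icc n (2*n-1), |aseq p k - aseq p (k+3)| :=
        Finset.sum_le_sum_of_subset_of_nonneg hsub (fun _ _ _ => abs_nonneg _)
      rw [Finset.sum_image (by intro a _ b _ h; simp only at h; omega)] at h1
      have hterm : ∀ j ∈ Finset.Ico (n/6+1) (n/3),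
          A⁻¹ ≤ |aseq p (6*j+3) - aseq p (6*j+3+3)| := by
        intro j hj
        simp only [Finset.mem_Ico] at hj
        rw [aseq_diff p (by omega : (6*j+3) % 6 = 3), one_div]
        have hle6 : 6*j+6 ≤ 2*n := by omega
        have hle6r : 6*(j:ℝ)+6 ≤ 2*(n:ℝ) := by exact_mod_cast hle6
        have hle6' : ((6*j+3:ℕ):ℝ) + 3 ≤ 2*(n:ℝ)+2 := by push_cast; linarith
        have hle7 : ((6*j+3:ℕ):ℝ) + 4 ≤ 2*(n:ℝ)+3 := by push_cast; linarith
        have hBpos : 0 < (((6*j+3:ℕ):ℝ)+3) ^ (1+1/p) * Real.log (((6*j+3:ℕ):ℝ)+4) := by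
          apply mul_pos (Real.rpow_pos_of_pos (by positivity) _)
          apply Real.log_pos
          have : (0:ℝ) ≤ ((6*j+3:ℕ):ℝ) := Nat.cast_nonneg _
          linarith
        apply inv_anti₀ hBpos
        rw [hA]
        apply mul_le_mul
        · exact Real.rpow_le_rpow (by positivity) hle6' (by positivity)
        · exact Real.log_le_log (by positivity) hle7
        · apply Real.log_nonneg
          have : (0:ℝ) ≤ ((6*j+3:ℕ):ℝ) := Nat.cast_nonneg _
          linarith
        · exact le_of_lt (Real.rpow_pos_of_pos (by linarith) _)
      have hsum : ((Finset.Ico (n/6+1) (n/3)).card : ℝ) * A⁻¹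
          ≤ ∑ j ∈ Finset.Ico (n/6+1) (n/3), |aseq p (6*j+3) - aseq p (6*j+3+3)| := by
        have := Finset.card_nsmul_le_sum (Finset.Ico (n/6+1) (n/3))
          (fun j => |aseq p (6*j+3) - aseq p (6*j+3+3)|) A⁻¹ hterm
        rwa [nsmul_eq_mul] at this
      have hcard : (n:ℝ) ≤ 24 * ((Finset.Ico (n/6+1) (n/3)).card : ℝ) := by
        have h : n ≤ 24 * (Finset.Ico (n/6+1) (n/3)).card := by
          rw [Nat.card_Ico]; omega
        exact_mod_cast h
      have hc : (n:ℝ)/24 ≤ ((Finset.Ico (n/6+1) (n/3)).card : ℝ) := by linarith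
      calc ((n:ℝ)/24) * A⁻¹ ≤ ((Finset.Ico (n/6+1) (n/3)).card : ℝ) * A⁻¹ := by
            exact mul_le_mul_of_nonneg_right hc (le_of_lt (inv_pos.mpr hApos))
      _ ≤ ∑ j ∈ Finset.Ico (n/6+1) (n/3), |aseq p (6*j+3) - aseq p (6*j+3+3)| := hsum
      _ ≤ ∑ k ∈ Finset.Icc n (2*n-1), |aseq p k - aseq p (k+3)| := h1
    -- upper bound for the other side
    have hup : C / n * ∑ k ∈ Finset.Icc N (2*N), aseq p k ≤ C / n * 16 :=
      mul_le_mul_of_nonneg_left (sum_aseq_le hp hN1) (div_nonneg (le_of_lt hC) (le_of_lt hn0))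
    have hmid : C / (n:ℝ) * 16 < ((n:ℝ)/24) * A⁻¹ := by
      rw [show ((n:ℝ)/24) * A⁻¹ = (n:ℝ) / (24*A) by rw [← div_eq_mul_inv, div_div],
        show C/(n:ℝ)*16 = 16*C/(n:ℝ) by ring,
        div_lt_div_iff₀ hn0 (by positivity)]
      nlinarith [hev]
    linarith
  refine ⟨part1, ?_⟩
  rintro ⟨C, lam, b₁, b₂, b₃, hC, hlam, hb₁, hb₁t, hb₂, hb₂t, hb₃, hb₃t, _, H2, _⟩
  obtain ⟨n, hnlam, hall⟩ := part1 C hC lam hlam b₂ hb₂ hb₂t lam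
  obtain ⟨N, hN1, hN2, hle⟩ := H2 1 n le_rfl hnlam
  have ha1 : 0 < aseq p 1 := aseq_pos hp le_rfl
  have hNpos : 1 ≤ N := by
    have h0 : (0:ℝ) < N := lt_of_lt_of_le (hb₂ n) hN1
    exact_mod_cast h0
  have hstrict := hall N hN1 hN2
  simp only [] at hle
  rw [show ((1:ℝ)/1) = 1 by norm_num] at hle
  simp only [Real.rpow_one] at hle
  have hL : ∑ k ∈ Finset.Icc n (2*n-1),
      ‖((aseq p 1 * aseq p k : ℝ) : ℂ) - ((aseq p 1 * aseq p (k+3) : ℝ) : ℂ)‖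
      = aseq p 1 * ∑ k ∈ Finset.Icc n (2*n-1), |aseq p k - aseq p (k+3)| := by
    rw [Finset.mul_sum]
    refine Finset.sum_congr rfl fun k _ => ?_
    rw [← Complex.ofReal_sub, Complex.norm_real, Real.norm_eq_abs,
      show aseq p 1 * aseq p k - aseq p 1 * aseq p (k+3)
        = aseq p 1 * (aseq p k - aseq p (k+3)) by ring,
      abs_mul, abs_of_pos ha1]
  have hR : ∑ k ∈ Finset.Icc N (2*N), ‖((aseq p 1 * aseq p k : ℝ) : ℂ)‖
      = aseq p 1 * ∑ k ∈ Finset.Icc N (2*N), aseq p k := by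
    rw [Finset.mul_sum]
    refine Finset.sum_congr rfl fun k hk => ?_
    simp only [Finset.mem_Icc] at hk
    rw [Complex.norm_real, Real.norm_eq_abs,
      abs_of_pos (mul_pos ha1 (aseq_pos hp (by omega)))]
  rw [hL, hR] at hle
  nlinarith [mul_lt_mul_of_pos_left hstrict ha1]


end
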